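/- arXiv:1901.02181 — 4 statements merged into one kernel-verified Lean document; each statement's English description precedes it below -/
import Mathlib

section
/- For real numbers g and f, there exists σ ≥ 0 with g + σ ≥ 0 and σ·f = 0 if and only if the implication (g < 0 → f = 0) holds. -/
theorem stmt_1 (g f : ℝ) :
    (∃ σ : ℝ, σ ≥ 0 ∧ g + σ ≥ 0 ∧ σ * f = 0) ↔ (g < 0 → f = 0) := by
  constructor
  · rintro ⟨σ, -, hgσ, hσf⟩ hg
    exact (mul_eq_zero.1 hσf).resolve_left (by linarith)
  · intro h
    by_cases hg : g < 0
    · exact ⟨-g, by linarith, by linarith, by rw [h hg, mul_zero]⟩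
    · exact ⟨0, le_rfl, by linarith, zero_mul f⟩
end

section
/- Let g : Fin n → ℝ and f : Fin m → ℝ with f i ≥ 0 for all i, and let ŝ i = -min(g i, 0). Then (∏ i, ŝ i) · (∑ j, f j) = 0 if and only if the implication ((∀ i, g i < 0) → (∀ j, f j = 0)) holds. -/
theorem stmt_8 {n m : ℕ} (hn : 1 ≤ n) (hm : 1 ≤ m)
    (g : Fin n → ℝ) (f : Fin m → ℝ) (hf : ∀ j, f j ≥ 0)
    (s : Fin n → ℝ) (hs : ∀ i, s i = -min (g i) 0) :
    (∏ i, s i) * (∑ j, f j) = 0 ↔ ((∀ i, g i < 0) → ∀ j, f j = 0) := by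
  constructor
  · intro h hg j
    rcases mul_eq_zero.mp h with hp | hsum
    · exfalso
      obtain ⟨i, hi⟩ := Finset.prod_eq_zero_iff.mp hp
      have := hs i
      rw [min_eq_left (hg i).le] at this
      have : g i = 0 := by linarith [hi.2, this]
      linarith [hg i]
    · have := (Finset.sum_eq_zero_iff_of_nonneg (fun j _ => hf j)).mp hsum
      exact this j (Finset.mem_univ j)
  · intro h
    by_cases hg : ∀ i, g i < 0
    · have hsum : ∑ j, f j = 0 := Finset.sum_eq_zero (fun j _ => h hg j)
      rw [hsum, mul_zero]
    · push_neg at hg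
      obtain ⟨i, hi⟩ := hg
      have : s i = 0 := by rw [hs i, min_eq_right hi]; ring
      rw [Finset.prod_eq_zero (Finset.mem_univ i) this, zero_mul]
end

section
/- Let g : Fin n → ℝ and f : Fin m → ℝ, and let ŝ i = -min(g i, 0). Then (∏ i, ŝ i) · (∏ j, f j) = 0 if and only if the implication ((∀ i, g i < 0) → (∃ j, f j = 0)) holds. -/
lemma neg_min_zero_eq_zero_iff {α : Type*} [AddCommGroup α] [LinearOrder α] {a : α} :
    -min a 0 = 0 ↔ 0 ≤ a := by
  rw [neg_eq_zero, min_eq_right_iff]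

lemma prod_neg_min_zero_eq_zero_iff {ι R : Type*} [Fintype ι] [CommRing R] [LinearOrder R]
    [NoZeroDivisors R] [Nontrivial R] (g : ι → R) :
    ∏ i, -min (g i) 0 = 0 ↔ ∃ i, 0 ≤ g i := by
  simp only [Finset.prod_eq_zero_iff, Finset.mem_univ, true_and, neg_min_zero_eq_zero_iff]

theorem stmt_9_general {n m : ℕ}
    (g : Fin n → ℝ) (f : Fin m → ℝ)
    (s : Fin n → ℝ) (hs : ∀ i, s i = -min (g i) 0) :
    (∏ i, s i) * (∏ j, f j) = 0 ↔ ((∀ i, g i < 0) → ∃ j, f j = 0) := by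
  obtain rfl : s = fun i => -min (g i) 0 := funext hs
  rw [mul_eq_zero, prod_neg_min_zero_eq_zero_iff, Finset.prod_eq_zero_iff, imp_iff_not_or]
  simp only [not_forall, not_lt, Finset.mem_univ, true_and]

theorem stmt_9 {n m : ℕ} (hn : 1 ≤ n) (hm : 1 ≤ m)
    (g : Fin n → ℝ) (f : Fin m → ℝ)
    (s : Fin n → ℝ) (hs : ∀ i, s i = -min (g i) 0) :
    (∏ i, s i) * (∏ j, f j) = 0 ↔ ((∀ i, g i < 0) → ∃ j, f j = 0) :=
  stmt_9_general g f s hs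
end

section
/- Let g : Fin n → ℝ and f : Fin m → ℝ (with no sign restriction on f), and let ŝ i = -min(g i, 0). Then the system of m equalities (f j) · (∏ i, ŝ i) = 0 for all j holds if and only if ((∀ i, g i < 0) → (∀ j, f j = 0)). -/
theorem stmt_12 {n m : ℕ} (hn : 1 ≤ n) (hm : 1 ≤ m)
    (g : Fin n → ℝ) (f : Fin m → ℝ)
    (s : Fin n → ℝ) (hs : ∀ i, s i = -min (g i) 0) :
    (∀ j, f j * (∏ i, s i) = 0) ↔ ((∀ i, g i < 0) → ∀ j, f j = 0) := by
  constructor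
  · intro h hg j
    have hpos : 0 < ∏ i, s i := by
      apply Finset.prod_pos
      intro i _
      rw [hs i, min_eq_left (le_of_lt (hg i))]
      linarith [hg i]
    have := h j
    rcases mul_eq_zero.mp this with h' | h'
    · exact h'
    · exact absurd h' (ne_of_gt hpos)
  · intro h j
    by_cases hg : ∀ i, g i < 0
    · rw [h hg j, zero_mul]
    · push_neg at hg
      obtain ⟨i, hi⟩ := hg
      have : s i = 0 := by rw [hs i, min_eq_right hi, neg_zero]
      rw [Finset.prod_eq_zero (Finset.mem_univ i) this, mul_zero]
end
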